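/- Let Γ₁ be the image of φ : ℙ¹(ℂ) → ℙ³(ℂ), [x:y] ↦ [x⁵ : x⁴y − 4x²y³ : −4x³y² + xy⁴ : y⁵]. If L ⊂ ℙ³(ℂ) is a line such that there exist four distinct points t₁, t₂, t₃, t₄ ∈ ℙ¹(ℂ) with φ(tᵢ) ∈ L for i = 1,2,3,4, then L = L₁ = {[x₀:x₁:x₂:x₃] : x₀ + x₂ = 0 and x₃ + x₁ = 0}. That is, L₁ is the unique quadrisecant line to the rational quintic curve Γ₁. -/

import Mathlib

noncomputable section

/-- Projective 3-space over ℂ. -/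
abbrev P3 := Projectivization ℂ (Fin 4 → ℂ)

/-- Projective line over ℂ. -/
abbrev P1 := Projectivization ℂ (Fin 2 → ℂ)

/-- A line in ℙ³(ℂ): the image in ℙ³ of a 2-dimensional linear subspace of ℂ⁴. -/
def IsLine (L : Set P3) : Prop :=
  ∃ W : Submodule ℂ (Fin 4 → ℂ), Module.finrank ℂ W = 2 ∧ L = {p : P3 | p.submodule ≤ W}

/-- Homogeneous coordinates of φ([x:y]) = [x⁵ : x⁴y − 4x²y³ : −4x³y² + xy⁴ : y⁵]
(the parametrization φ_{a,b} with (a,b) = (1,−4)). -/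
def phiVec (x y : ℂ) : Fin 4 → ℂ :=
  ![x ^ 5, x ^ 4 * y - 4 * x ^ 2 * y ^ 3, -4 * x ^ 3 * y ^ 2 + x * y ^ 4, y ^ 5]

lemma phiVec_rep_ne_zero (t : P1) : phiVec (t.rep 0) (t.rep 1) ≠ 0 := by
  intro h
  apply t.rep_nonzero
  have h0 := congrFun h 0
  have h3 := congrFun h 3
  simp [phiVec] at h0 h3
  funext i
  fin_cases i
  · simpa using h0
  · simpa using h3

/-- The map φ : ℙ¹ → ℙ³ with image the rational quintic Γ₁ = C_{(1,−4)}. -/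
def phiP (t : P1) : P3 :=
  Projectivization.mk ℂ (phiVec (t.rep 0) (t.rep 1)) (phiVec_rep_ne_zero t)

/-- The line L₁ = {x₀ + x₂ = 0, x₃ + x₁ = 0} ⊂ ℙ³. -/
def lineL1 : Set P3 :=
  {p : P3 | p.rep 0 + p.rep 2 = 0 ∧ p.rep 3 + p.rep 1 = 0}

/-!
Write `φ = P ∘ ν`, where `ν [x : y] = [x⁵ : x⁴y : … : y⁵]` is the rational normal quintic and
`P : ℂ⁶ → ℂ⁴` (`phiMatrix`) is a linear projection with two-dimensional kernel. For four
distinct `tᵢ` the vectors `ν tᵢ` span a four-dimensional `S` (projective Vandermonde), and `P`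
maps `S` into the plane `W` of the line; counting dimensions, `ker P ⊆ S` and `P S = W`. Pairing
`ker P` with the quintics `x g` and `y g`, where `g` is a quartic vanishing at the `tᵢ`, forces
`g` to be a multiple of `x⁴ - 4x²y² + y⁴`. So the `tᵢ` are its roots, `φ tᵢ ∈ L₁`, and `P S` is
also the plane of `L₁`.
-/

open Module Submodule Matrix

section

variable {K : Type*} [Field K]

theorem Submodule.ker_le_and_map_eq_of_finrank_le {V E : Type*} [AddCommGroup V] [Module K V]
    [AddCommGroup E] [Module K E] [FiniteDimensional K V] [FiniteDimensional K E]
    (f : V →ₗ[K] E) {S : Submodule K V} {W : Submodule K E} (hSW : S.map f ≤ W)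
    (hdim : finrank K W + finrank K (LinearMap.ker f) ≤ finrank K S) :
    LinearMap.ker f ≤ S ∧ S.map f = W := by
  have hrank := (f.domRestrict S).finrank_range_add_finrank_ker
  rw [LinearMap.range_domRestrict, LinearMap.ker_domRestrict,
    ← Submodule.finrank_map_subtype_eq, Submodule.map_comap_subtype] at hrank
  have hmap := Submodule.finrank_mono hSW
  have hinf := Submodule.finrank_mono (inf_le_right : S ⊓ LinearMap.ker f ≤ _)
  exact ⟨inf_eq_right.mp (Submodule.eq_of_le_of_finrank_eq inf_le_right (by omega)),
    Submodule.eq_of_le_of_finrank_eq hSW (by omega)⟩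

theorem Matrix.finrank_ker_mulVecLin_add_card {m n : Type*} [Fintype m] [Fintype n]
    {A : Matrix m n K} (hA : Function.Surjective A.mulVecLin) :
    finrank K (LinearMap.ker A.mulVecLin) + Fintype.card m = Fintype.card n := by
  have hrank := A.mulVecLin.finrank_range_add_finrank_ker
  rw [LinearMap.range_eq_top.mpr hA, finrank_top, Module.finrank_fintype_fun_eq_card,
    Module.finrank_fintype_fun_eq_card] at hrank
  omega

theorem Matrix.dotProduct_eq_zero_of_mem_span_row {ι n : Type*} [Fintype n]
    {A : Matrix ι n K} {c : n → K} (hc : A *ᵥ c = 0) {s : n → K}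
    (hs : s ∈ span K (Set.range A.row)) : s ⬝ᵥ c = 0 := by
  induction hs using Submodule.span_induction with
  | mem _ h => obtain ⟨i, rfl⟩ := h; exact congrFun hc i
  | zero => exact zero_dotProduct c
  | add _ _ _ _ h₁ h₂ => rw [add_dotProduct, h₁, h₂, add_zero]
  | smul a _ _ h => rw [smul_dotProduct, h, smul_zero]

theorem Matrix.linearIndependent_projVandermonde {n : ℕ} {v w : Fin n → K}
    (h : ∀ i j, i ≠ j → v j * w i - v i * w j ≠ 0) :
    LinearIndependent K (projVandermonde v w).row := by
  refine linearIndependent_rows_of_det_ne_zero (A := projVandermonde v w) ?_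
  rw [det_projVandermonde, Finset.prod_ne_zero_iff]
  exact fun i _ => Finset.prod_ne_zero_iff.mpr fun j hj => h i j (Finset.mem_Ioi.mp hj).ne

theorem Matrix.linearIndependent_rectVandermonde [Infinite K] {k n : ℕ} (hkn : k ≤ n)
    {v w : Fin k → K} (hvw : ∀ i, v i ≠ 0 ∨ w i ≠ 0)
    (h : ∀ i j, i ≠ j → v j * w i - v i * w j ≠ 0) :
    LinearIndependent K (rectVandermonde v w n).row := by
  classical
  obtain ⟨d, hd⟩ := Nat.exists_eq_add_of_le hkn
  induction d generalizing k with
  | zero => subst hd; exact linearIndependent_projVandermonde h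
  | succ d ih =>
    -- adjoin a point `(a, 1)` proportional to none of the `(v i, w i)`
    obtain ⟨a, ha⟩ := Infinite.exists_notMem_finset (Finset.univ.image fun i => v i / w i)
    have hnew : ∀ i, a * w i - v i ≠ 0 := by
      intro i hi
      rcases eq_or_ne (w i) 0 with hw | hw
      · exact (hvw i).resolve_right (not_not.mpr hw) (by simpa [hw] using hi)
      · exact ha (Finset.mem_image.mpr ⟨i, Finset.mem_univ _, by
          rw [div_eq_iff hw]; linear_combination -hi⟩)
    have hext : LinearIndependent K (rectVandermonde (Fin.snoc v a) (Fin.snoc w 1) n).row := by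
      refine ih (by omega) ?_ ?_ (by omega)
      · intro i
        induction i using Fin.lastCases <;> simp [hvw]
      · intro i j hij
        induction i using Fin.lastCases <;> induction j using Fin.lastCases
        · exact absurd rfl hij
        · simpa [neg_sub] using neg_ne_zero.mpr (hnew _)
        · simpa using hnew _
        · simpa using h _ _ (by simpa using hij)
    convert hext.comp Fin.castSucc (Fin.castSucc_injective _) using 1
    funext i j
    simp [rectVandermonde_apply]

theorem Matrix.rectVandermonde_mulVec_snoc_zero {α : Type*} {n : ℕ} (v w : α → K)
    (c : Fin n → K) (i : α) :
    (rectVandermonde v w (n + 1) *ᵥ Fin.snoc c 0) i = w i * (rectVandermonde v w n *ᵥ c) i := by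
  simp only [mulVec, dotProduct, Fin.sum_univ_castSucc, Fin.snoc_castSucc, Fin.snoc_last,
    mul_zero, add_zero, Finset.mul_sum, rectVandermonde_apply, Fin.rev_castSucc, Fin.val_succ,
    Fin.val_castSucc]
  exact Finset.sum_congr rfl fun j _ => by ring

theorem Matrix.rectVandermonde_mulVec_cons_zero {α : Type*} {n : ℕ} (v w : α → K)
    (c : Fin n → K) (i : α) :
    (rectVandermonde v w (n + 1) *ᵥ Fin.cons 0 c) i = v i * (rectVandermonde v w n *ᵥ c) i := by
  simp only [mulVec, dotProduct, Fin.sum_univ_succ, Fin.cons_succ, Fin.cons_zero,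
    mul_zero, zero_add, Finset.mul_sum, rectVandermonde_apply, Fin.rev_succ, Fin.val_succ,
    Fin.val_castSucc]
  exact Finset.sum_congr rfl fun j _ => by ring

theorem Projectivization.rep_zero_mul_rep_one_sub_ne_zero {s t : Projectivization K (Fin 2 → K)}
    (h : s ≠ t) : s.rep 0 * t.rep 1 - s.rep 1 * t.rep 0 ≠ 0 := by
  have hli := independent_iff.mp ((independent_pair_iff_ne s t).mpr h)
  rw [show Projectivization.rep ∘ ![s, t] = ![s.rep, t.rep] by ext i : 1; fin_cases i <;> rfl]
    at hli
  have hdet := (linearIndependent_rows_iff_isUnit (A := Matrix.of ![s.rep, t.rep]).mp hli).map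
    Matrix.detMonoidHom
  simpa [det_fin_two] using hdet.ne_zero

end

/-- Row `i` lists the monomials `x ^ (n - 1 - j) * y ^ j` at the representative `(x, y)` of
`t i`, so `monomialMatrix t n *ᵥ c` lists the values at the `t i` of the binary form of degree
`n - 1` with coefficients `c`. -/
def monomialMatrix {ι : Type*} (t : ι → P1) (n : ℕ) : Matrix ι (Fin n) ℂ :=
  rectVandermonde (fun i => (t i).rep 1) (fun i => (t i).rep 0) n

theorem linearIndependent_monomialMatrix {k n : ℕ} {t : Fin k → P1} (ht : Function.Injective t)
    (hkn : k ≤ n) : LinearIndependent ℂ (monomialMatrix t n).row := by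
  refine linearIndependent_rectVandermonde hkn (fun i => ?_) (fun i j hij => ?_)
  · by_contra! h
    exact (t i).rep_nonzero (by ext j; fin_cases j <;> simp [h.1, h.2])
  · have := Projectivization.rep_zero_mul_rep_one_sub_ne_zero (ht.ne hij)
    exact fun e => this (by linear_combination e)

def phiMatrix : Matrix (Fin 4) (Fin 6) ℂ :=
  !![1, 0, 0, 0, 0, 0; 0, 1, 0, -4, 0, 0; 0, 0, -4, 0, 1, 0; 0, 0, 0, 0, 0, 1]

theorem phiMatrix_mulVec_monomialMatrix {ι : Type*} (t : ι → P1) (i : ι) :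
    phiMatrix *ᵥ monomialMatrix t 6 i = phiVec ((t i).rep 0) ((t i).rep 1) := by
  ext r
  fin_cases r <;>
    simp [phiMatrix, monomialMatrix, rectVandermonde_apply, mulVec, dotProduct, Fin.sum_univ_succ,
      phiVec, sub_eq_add_neg, mul_assoc, mul_comm]

theorem finrank_ker_phiMatrix : finrank ℂ (LinearMap.ker phiMatrix.mulVecLin) = 2 := by
  have hsurj : Function.Surjective phiMatrix.mulVecLin := fun u =>
    ⟨![u 0, u 1, 0, 0, u 2, u 3], by
      ext i; fin_cases i <;> simp [phiMatrix, mulVec, dotProduct, Fin.sum_univ_succ]⟩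
  simpa using finrank_ker_mulVecLin_add_card hsurj

def lineL1Submodule : Submodule ℂ (Fin 4 → ℂ) :=
  LinearMap.ker (!![1, 0, 1, 0; 0, 1, 0, 1] : Matrix (Fin 2) (Fin 4) ℂ).mulVecLin

theorem mem_lineL1Submodule {v : Fin 4 → ℂ} :
    v ∈ lineL1Submodule ↔ v 0 + v 2 = 0 ∧ v 3 + v 1 = 0 := by
  simp [lineL1Submodule, funext_iff, Fin.forall_fin_two, dotProduct, Fin.sum_univ_succ,
    add_comm (v 3)]

theorem finrank_lineL1Submodule : finrank ℂ lineL1Submodule = 2 := by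
  have hsurj : Function.Surjective
      (!![1, 0, 1, 0; 0, 1, 0, 1] : Matrix (Fin 2) (Fin 4) ℂ).mulVecLin := fun u =>
    ⟨![u 0, u 1, 0, 0], by ext i; fin_cases i <;> simp [mulVec, dotProduct, Fin.sum_univ_succ]⟩
  have h := finrank_ker_mulVecLin_add_card hsurj
  rw [Fintype.card_fin, Fintype.card_fin] at h
  exact Nat.add_right_cancel h

theorem setOf_submodule_le_lineL1Submodule :
    {p : P3 | p.submodule ≤ lineL1Submodule} = lineL1 := by
  ext p
  simp [Projectivization.submodule_eq, mem_lineL1Submodule, lineL1]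

theorem phiVec_mem_lineL1Submodule {x y : ℂ} (h : x ^ 4 - 4 * x ^ 2 * y ^ 2 + y ^ 4 = 0) :
    phiVec x y ∈ lineL1Submodule := by
  simp only [mem_lineL1Submodule, phiVec, cons_val]
  exact ⟨by linear_combination x * h, by linear_combination y * h⟩

theorem phiP_submodule_le_iff (t : P1) (W : Submodule ℂ (Fin 4 → ℂ)) :
    (phiP t).submodule ≤ W ↔ phiVec (t.rep 0) (t.rep 1) ∈ W := by
  rw [phiP, Projectivization.submodule_mk, span_singleton_le_iff_mem]

theorem eq_smul_quartic_of_ker_phiMatrix_le {ι : Type*} {t : ι → P1}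
    (hker : LinearMap.ker phiMatrix.mulVecLin ≤ span ℂ (Set.range (monomialMatrix t 6).row))
    {g : Fin 5 → ℂ} (hg : monomialMatrix t 5 *ᵥ g = 0) : g = g 0 • ![1, 0, -4, 0, 1] := by
  -- `x * g` and `y * g` are quintics vanishing at every `t i`
  have hgx : monomialMatrix t 6 *ᵥ Fin.snoc g 0 = 0 := funext fun i => by
    rw [monomialMatrix, rectVandermonde_mulVec_snoc_zero, ← monomialMatrix, hg]; simp
  have hgy : monomialMatrix t 6 *ᵥ Fin.cons 0 g = 0 := funext fun i => by
    rw [monomialMatrix, rectVandermonde_mulVec_cons_zero, ← monomialMatrix, hg]; simp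
  have hκ₁ : ![0, 4, 0, 1, 0, 0] ∈ LinearMap.ker phiMatrix.mulVecLin := by
    ext r; fin_cases r <;> simp [phiMatrix, mulVec, dotProduct, Fin.sum_univ_succ]
  have hκ₂ : ![0, 0, 1, 0, 4, 0] ∈ LinearMap.ker phiMatrix.mulVecLin := by
    ext r; fin_cases r <;> simp [phiMatrix, mulVec, dotProduct, Fin.sum_univ_succ]
  have e₁ : 4 * g 1 + g 3 = 0 := by
    simpa [dotProduct, Fin.sum_univ_castSucc] using
      dotProduct_eq_zero_of_mem_span_row hgx (hker hκ₁)
  have e₂ : g 2 + 4 * g 4 = 0 := by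
    simpa [dotProduct, Fin.sum_univ_castSucc] using
      dotProduct_eq_zero_of_mem_span_row hgx (hker hκ₂)
  have e₃ : 4 * g 0 + g 2 = 0 := by
    simpa [dotProduct, Fin.sum_univ_succ] using dotProduct_eq_zero_of_mem_span_row hgy (hker hκ₁)
  have e₄ : g 1 + 4 * g 3 = 0 := by
    simpa [dotProduct, Fin.sum_univ_succ] using dotProduct_eq_zero_of_mem_span_row hgy (hker hκ₂)
  have h₁ : g 1 = 0 := by linear_combination (4 * e₁ - e₄) / 15
  have h₂ : g 2 = -4 * g 0 := by linear_combination e₃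
  have h₃ : g 3 = 0 := by linear_combination (4 * e₄ - e₁) / 15
  have h₄ : g 4 = g 0 := by linear_combination (e₂ - e₃) / 4
  funext j
  fin_cases j <;> simp [h₁, h₂, h₃, h₄, mul_comm]

theorem quartic_rep_eq_zero_of_ker_phiMatrix_le {ι : Type*} [Fintype ι]
    (hι : Fintype.card ι < 5) {t : ι → P1}
    (hker : LinearMap.ker phiMatrix.mulVecLin ≤ span ℂ (Set.range (monomialMatrix t 6).row))
    (i : ι) :
    (t i).rep 0 ^ 4 - 4 * (t i).rep 0 ^ 2 * (t i).rep 1 ^ 2 + (t i).rep 1 ^ 4 = 0 := by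
  obtain ⟨g, hg, hg0⟩ := (Submodule.ne_bot_iff _).mp
    (LinearMap.ker_ne_bot_of_finrank_lt (f := (monomialMatrix t 5).mulVecLin) (by simpa using hι))
  rw [LinearMap.mem_ker, mulVecLin_apply] at hg
  have hgQ := eq_smul_quartic_of_ker_phiMatrix_le hker hg
  have hg₀ : g 0 ≠ 0 := fun h => hg0 (by rw [hgQ, h, zero_smul])
  have hgi := congrFun hg i
  rw [hgQ, mulVec_smul, Pi.smul_apply, Pi.zero_apply, smul_eq_zero] at hgi
  simpa [monomialMatrix, mulVec, dotProduct, rectVandermonde_apply, Fin.sum_univ_succ,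
    sub_eq_add_neg, add_assoc, mul_assoc, mul_comm, mul_left_comm] using hgi.resolve_left hg₀

theorem eq_lineL1Submodule_of_phiVec_mem {t : Fin 4 → P1} (ht : Function.Injective t)
    {W : Submodule ℂ (Fin 4 → ℂ)} (hW : finrank ℂ W = 2)
    (htW : ∀ i, phiVec ((t i).rep 0) ((t i).rep 1) ∈ W) : W = lineL1Submodule := by
  set S := span ℂ (Set.range (monomialMatrix t 6).row)
  have hS : finrank ℂ S = 4 := by
    simpa using finrank_span_eq_card (linearIndependent_monomialMatrix ht (by norm_num))
  have hSW : S.map phiMatrix.mulVecLin ≤ W := by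
    rw [map_span, span_le]
    rintro _ ⟨_, ⟨i, rfl⟩, rfl⟩
    simpa [row_apply', phiMatrix_mulVec_monomialMatrix] using htW i
  obtain ⟨hker, hmap⟩ := ker_le_and_map_eq_of_finrank_le _ hSW
    (by rw [hW, finrank_ker_phiMatrix, hS])
  have hSU : S.map phiMatrix.mulVecLin ≤ lineL1Submodule := by
    rw [map_span, span_le]
    rintro _ ⟨_, ⟨i, rfl⟩, rfl⟩
    simpa [row_apply', phiMatrix_mulVec_monomialMatrix] using phiVec_mem_lineL1Submodule
      (quartic_rep_eq_zero_of_ker_phiMatrix_le (by simp) hker i)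
  exact Submodule.eq_of_le_of_finrank_eq (hmap ▸ hSU) (by rw [hW, finrank_lineL1Submodule])

/-- L₁ is the unique quadrisecant line of Γ₁: any line of ℙ³ containing the
images of four distinct points of ℙ¹ under φ equals L₁. -/
theorem stmt7 (L : Set P3) (hL : IsLine L) (t1 t2 t3 t4 : P1)
    (h12 : t1 ≠ t2) (h13 : t1 ≠ t3) (h14 : t1 ≠ t4)
    (h23 : t2 ≠ t3) (h24 : t2 ≠ t4) (h34 : t3 ≠ t4)
    (m1 : phiP t1 ∈ L) (m2 : phiP t2 ∈ L) (m3 : phiP t3 ∈ L) (m4 : phiP t4 ∈ L) :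
    L = lineL1 := by
  obtain ⟨W, hW, rfl⟩ := hL
  have ht : Function.Injective ![t1, t2, t3, t4] := by
    simp [Function.Injective, Fin.forall_fin_succ, h12, h13, h14, h23, h24, h34, h12.symm,
      h13.symm, h14.symm, h23.symm, h24.symm, h34.symm]
  have htW : ∀ i, phiVec ((![t1, t2, t3, t4] i).rep 0) ((![t1, t2, t3, t4] i).rep 1) ∈ W := by
    intro i
    fin_cases i
    exacts [(phiP_submodule_le_iff _ _).mp m1, (phiP_submodule_le_iff _ _).mp m2,
      (phiP_submodule_le_iff _ _).mp m3, (phiP_submodule_le_iff _ _).mp m4]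
  rw [eq_lineL1Submodule_of_phiVec_mem ht hW htW, setOf_submodule_le_lineL1Submodule]
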